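/- arXiv:0912.1764 — 2 statements merged into one kernel-verified Lean document; each statement's English description precedes it below -/
import Mathlib

section
/- Let L be a graded subalgebra of a G-graded Lie algebra Q = ⊕_{σ∈G} Q_σ. If Q is an algebra of quotients of L (in the non-graded sense), then Q is a graded algebra of quotients of L. -/
/-- The set of iterated adjoint actions of elements of the subalgebra `L` on `q`,
i.e. `q` together with all elements `ad x₁ ⋯ ad xₙ (q)` with `x₁, …, xₙ ∈ L`. -/
inductive AdOrbit {Φ : Type*} [CommRing Φ] {Q : Type*} [LieRing Q] [LieAlgebra Φ Q]
    (L : LieSubalgebra Φ Q) (q : Q) : Q → Prop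
  | base : AdOrbit L q q
  | step (x : Q) (hx : x ∈ L) {y : Q} (hy : AdOrbit L q y) : AdOrbit L q ⁅x, y⁆

/-- `_L(q)`: the `Φ`-linear span in `Q` of `q` together with all elements
`ad x₁ ⋯ ad xₙ (q)` with `x₁, …, xₙ ∈ L`. -/
def lSpan (Φ : Type*) [CommRing Φ] {Q : Type*} [LieRing Q] [LieAlgebra Φ Q]
    (L : LieSubalgebra Φ Q) (q : Q) : Submodule Φ Q :=
  Submodule.span Φ {y | AdOrbit L q y}

/-!
If `x ∈ L` witnesses the quotient condition for a homogeneous `p ∈ Q_σ` and `q ∈ Q_τ`, then so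
does a suitable homogeneous component `x_α`. Since `p` is homogeneous, `⁅x, p⁆_{ασ} = ⁅x_α, p⁆`,
and `⁅x, p⁆ ≠ 0` has a nonzero component, which picks `α`. For the second condition, `_L(q)` is a
graded submodule because `q` is homogeneous and `L` is graded, so it suffices to treat
homogeneous `y_β ∈ _L(q)`, where `⁅x_α, y_β⁆ = ⁅x, y_β⁆_{αβ}` lies in `L` because `L` is graded.
-/

open DirectSum Submodule

section Decomposition

variable {ι R M : Type*} [DecidableEq ι] [Semiring R] [AddCommMonoid M] [Module R M]
  (ℳ : ι → Submodule R M) [Decomposition ℳ]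

theorem exists_decompose_ne_zero {x : M} (hx : x ≠ 0) : ∃ i, (decompose ℳ x i : M) ≠ 0 := by
  classical
  by_contra! h
  exact hx (by rw [← sum_support_decompose ℳ x]; exact Finset.sum_eq_zero fun i _ => h i)

theorem isHomogeneous_span {s : Set M} (hs : ∀ z ∈ s, ∀ i, (decompose ℳ z i : M) ∈ span R s) :
    SetLike.IsHomogeneous ℳ (span R s) := by
  intro i y hy
  induction hy using span_induction with
  | mem z hz => exact hs z hz i
  | zero => simp
  | add a b _ _ ha hb =>
    rw [decompose_add, DirectSum.add_apply, coe_add]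
    exact add_mem ha hb
  | smul c a _ ha =>
    rw [decompose_smul, DirectSum.smul_apply, coe_smul]
    exact smul_mem _ c ha

end Decomposition

section GradedLie

variable {Φ : Type*} [CommRing Φ] {Q : Type*} [LieRing Q] [LieAlgebra Φ Q]

theorem lie_mem_lSpan (L : LieSubalgebra Φ Q) (q : Q) {w y : Q} (hw : w ∈ L)
    (hy : y ∈ lSpan Φ L q) : ⁅w, y⁆ ∈ lSpan Φ L q := by
  induction hy using span_induction with
  | mem z hz => exact subset_span (AdOrbit.step w hw hz)
  | zero => simp
  | add a b _ _ ha hb =>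
    rw [lie_add]
    exact add_mem ha hb
  | smul c a _ ha =>
    rw [lie_smul]
    exact smul_mem _ c ha

variable {G : Type*} [Group G] [DecidableEq G] (𝒜 : G → Submodule Φ Q) [Decomposition 𝒜]
  (hbracket : ∀ (σ τ : G) (x y : Q), x ∈ 𝒜 σ → y ∈ 𝒜 τ → ⁅x, y⁆ ∈ 𝒜 (σ * τ))
include hbracket

theorem decompose_lie_of_mem {β : G} {z : Q} (hz : z ∈ 𝒜 β) (w : Q) (α : G) :
    (decompose 𝒜 ⁅w, z⁆ (α * β) : Q) = ⁅(decompose 𝒜 w α : Q), z⁆ := by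
  induction w using Decomposition.inductionOn 𝒜 with
  | zero => simp
  | @homogeneous i m =>
    by_cases hi : i = α
    · subst hi
      rw [decompose_of_mem_same 𝒜 m.2, decompose_of_mem_same 𝒜 (hbracket _ _ _ _ m.2 hz)]
    · rw [decompose_of_mem_ne 𝒜 m.2 hi,
        decompose_of_mem_ne 𝒜 (hbracket _ _ _ _ m.2 hz) (fun h => hi (mul_right_cancel h)),
        zero_lie]
  | add a b ha hb =>
    simp only [add_lie, decompose_add, DirectSum.add_apply, coe_add, ha, hb]

theorem decompose_lie [∀ (i) (x : 𝒜 i), Decidable (x ≠ 0)] (w z : Q) (β : G) :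
    (decompose 𝒜 ⁅w, z⁆ β : Q) = ∑ γ ∈ (decompose 𝒜 z).support,
      ⁅(decompose 𝒜 w (β * γ⁻¹) : Q), (decompose 𝒜 z γ : Q)⁆ := by
  conv_lhs => rw [← sum_support_decompose 𝒜 z]
  rw [lie_sum, decompose_sum, DFinsupp.finsetSum_apply, AddSubmonoidClass.coe_finsetSum]
  refine Finset.sum_congr rfl fun γ _ => ?_
  rw [← decompose_lie_of_mem 𝒜 hbracket (decompose 𝒜 z γ).2, inv_mul_cancel_right]

theorem isHomogeneous_lSpan {L : LieSubalgebra Φ Q} (hL : SetLike.IsHomogeneous 𝒜 L)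
    {τ : G} {q : Q} (hq : q ∈ 𝒜 τ) : SetLike.IsHomogeneous 𝒜 (lSpan Φ L q) := by
  classical
  refine isHomogeneous_span 𝒜 fun z hz => ?_
  induction hz with
  | base =>
    intro β
    by_cases hβ : τ = β
    · rw [← hβ, decompose_of_mem_same 𝒜 hq]
      exact subset_span AdOrbit.base
    · rw [decompose_of_mem_ne 𝒜 hq hβ]
      exact zero_mem _
  | step w hw _ ih =>
    intro β
    rw [decompose_lie 𝒜 hbracket]
    exact sum_mem fun γ _ => lie_mem_lSpan L q (hL _ hw) (ih γ)

end GradedLie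

/-- Let `L` be a graded subalgebra of a `G`-graded Lie algebra
`Q = ⊕_{σ∈G} Q_σ`.  If `Q` is an algebra of quotients of `L` (in the non-graded
sense), then `Q` is a graded algebra of quotients of `L`. -/
theorem quotients_implies_graded_quotients
    {Φ : Type*} [CommRing Φ] {G : Type*} [CommGroup G] [DecidableEq G]
    {Q : Type*} [LieRing Q] [LieAlgebra Φ Q]
    (𝒜 : G → Submodule Φ Q) [DirectSum.Decomposition 𝒜]
    (hbracket : ∀ (σ τ : G) (x y : Q), x ∈ 𝒜 σ → y ∈ 𝒜 τ → ⁅x, y⁆ ∈ 𝒜 (σ * τ))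
    (L : LieSubalgebra Φ Q)
    (hLgr : ∀ x ∈ L, ∀ σ : G, (DirectSum.decompose 𝒜 x σ : Q) ∈ L)
    (hquot : ∀ p : Q, p ≠ 0 → ∀ q : Q,
      ∃ x ∈ L, ⁅x, p⁆ ≠ 0 ∧ ∀ y ∈ lSpan Φ L q, ⁅x, y⁆ ∈ L) :
    ∀ (σ τ : G) (p q : Q), p ∈ 𝒜 σ → p ≠ 0 → q ∈ 𝒜 τ →
      ∃ (α : G) (x : Q), x ∈ 𝒜 α ∧ x ∈ L ∧ ⁅x, p⁆ ≠ 0 ∧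
        ∀ y ∈ lSpan Φ L q, ⁅x, y⁆ ∈ L := by
  classical
  intro σ τ p q hp hp0 hq
  have hL : SetLike.IsHomogeneous 𝒜 L := fun σ x hx => hLgr x hx σ
  obtain ⟨x, hxL, hxp, hxq⟩ := hquot p hp0 q
  obtain ⟨γ, hγ⟩ := exists_decompose_ne_zero 𝒜 hxp
  refine ⟨γ * σ⁻¹, _, (decompose 𝒜 x _).2, hL _ hxL, ?_, fun y hy => ?_⟩
  · rwa [← inv_mul_cancel_right γ σ, decompose_lie_of_mem 𝒜 hbracket hp] at hγ
  · rw [← sum_support_decompose 𝒜 y, lie_sum]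
    refine sum_mem fun β _ => ?_
    rw [← decompose_lie_of_mem 𝒜 hbracket (decompose 𝒜 y β).2]
    exact hL _ (hxq _ (isHomogeneous_lSpan 𝒜 hbracket hL hq β hy))
end

section
/- Let L be a graded semiprime graded subalgebra of a G-graded Lie algebra Q = ⊕_{σ∈G} Q_σ. If Q is a graded algebra of quotients of L, then Q is an algebra of quotients of L (in the non-graded sense). -/
/-!
Write `q = ∑ q_τ` in homogeneous components and let `D` be the graded ideal of the elements of `L`
that bracket every `_L(q_τ)` into `L`. Applying the graded hypothesis once for each `q_τ` shows that
`D` meets `_L(u)` nontrivially for every nonzero homogeneous `u ∈ L`. If every homogeneous element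
of `D` killed a nonzero homogeneous `p_σ`, then `D` would kill `_L(p_σ)`, and `D ∩ _L(p_σ)` would be
a graded ideal of `L` with zero square; it is nonzero because `_L(p_σ)` contains the nonzero
homogeneous element `[x, p_σ] ∈ L` provided by the graded hypothesis. So some homogeneous `x ∈ D`
has `[x, p_σ] ≠ 0`, a homogeneous component of `[x, p]`.
-/

open DirectSum LieSubmodule

section

variable {Φ : Type*} [CommRing Φ] {Q : Type*} [LieRing Q] [LieAlgebra Φ Q]

theorem lSpan_eq_lieSpan (L : LieSubalgebra Φ Q) (q : Q) :
    lSpan Φ L q = (lieSpan Φ L {q} : Submodule Φ Q) := by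
  refine le_antisymm (Submodule.span_le.2 fun y hy => ?_) ?_
  · induction hy with
    | base => exact subset_lieSpan rfl
    | step x hx _ ih => exact (lieSpan Φ L {q}).lie_mem (x := ⟨x, hx⟩) ih
  · let N : LieSubmodule Φ L Q :=
      { lSpan Φ L q with
        lie_mem := fun {x} => (Submodule.span_le.2 fun _ hz =>
          Submodule.subset_span (AdOrbit.step (x : Q) x.2 hz) :
            lSpan Φ L q ≤ (lSpan Φ L q).comap (LieAlgebra.ad Φ Q x)) }
    exact (lieSpan_le (N := N)).2 (Set.singleton_subset_iff.2 (Submodule.subset_span .base))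

theorem mem_lSpan_iff {L : LieSubalgebra Φ Q} {q y : Q} :
    y ∈ lSpan Φ L q ↔ y ∈ lieSpan Φ L {q} := by
  rw [lSpan_eq_lieSpan]
  rfl

namespace LieSubmodule

variable {L : LieSubalgebra Φ Q}

def colon (N : LieSubmodule Φ L Q) : LieSubmodule Φ L Q where
  carrier := {x | x ∈ L ∧ ∀ y ∈ N, ⁅x, y⁆ ∈ L}
  add_mem' ha hb :=
    ⟨L.add_mem ha.1 hb.1, fun y hy => by rw [add_lie]; exact L.add_mem (ha.2 y hy) (hb.2 y hy)⟩
  zero_mem' := ⟨L.zero_mem, fun y _ => by rw [zero_lie]; exact L.zero_mem⟩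
  smul_mem' r x hx :=
    ⟨L.smul_mem r hx.1, fun y hy => by rw [smul_lie]; exact L.smul_mem r (hx.2 y hy)⟩
  lie_mem {x c} hc := by
    refine ⟨L.lie_mem x.2 hc.1, fun y hy => ?_⟩
    rw [LieSubalgebra.coe_bracket_of_module, lie_lie]
    exact sub_mem (L.lie_mem x.2 (hc.2 y hy)) (hc.2 _ (N.lie_mem hy))

variable {N N' : LieSubmodule Φ L Q}

theorem mem_colon {x : Q} : x ∈ N.colon ↔ x ∈ L ∧ ∀ y ∈ N, ⁅x, y⁆ ∈ L := Iff.rfl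

theorem lie_mem_colon {x u : Q} (hx : x ∈ N.colon) (hu : u ∈ L) : ⁅x, u⁆ ∈ N.colon := by
  rw [← lie_skew]
  exact neg_mem (N.colon.lie_mem (x := ⟨u, hu⟩) hx)

theorem colon_sup : (N ⊔ N').colon = N.colon ⊓ N'.colon := by
  ext x
  simp only [mem_inf, mem_colon, mem_sup]
  constructor
  · rintro ⟨hx, h⟩
    exact ⟨⟨hx, fun y hy => by simpa using h y ⟨y, hy, 0, zero_mem _, add_zero y⟩⟩,
      ⟨hx, fun z hz => by simpa using h z ⟨0, zero_mem _, z, hz, zero_add z⟩⟩⟩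
  · rintro ⟨⟨hx, h⟩, -, h'⟩
    refine ⟨hx, ?_⟩
    rintro _ ⟨y, hy, z, hz, rfl⟩
    rw [lie_add]
    exact L.add_mem (h y hy) (h' z hz)

theorem lie_eq_zero_of_mem_lieSpan_singleton {D : LieSubmodule Φ L Q} {p : Q}
    (hDp : ∀ d ∈ D, ⁅d, p⁆ = 0) {d y : Q} (hd : d ∈ D) (hy : y ∈ lieSpan Φ L {p}) :
    ⁅d, y⁆ = 0 := by
  induction hy using lieSpan_induction generalizing d with
  | mem x hx => rw [Set.mem_singleton_iff.1 hx]; exact hDp d hd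
  | zero => exact lie_zero d
  | add x y _ _ hx hy => rw [lie_add, hx hd, hy hd, add_zero]
  | smul a x _ hx => rw [lie_smul, hx hd, smul_zero]
  | lie x y _ hy =>
    have hdx : ⁅d, (x : Q)⁆ ∈ D := by
      rw [← lie_skew]
      exact neg_mem (D.lie_mem hd)
    rw [LieSubalgebra.coe_bracket_of_module, leibniz_lie, hy hdx, hy hd, lie_zero, add_zero]

end LieSubmodule

section Essential

variable {G : Type*} (𝒜 : G → Submodule Φ Q)

def IsLieGrading [Mul G] : Prop :=
  ∀ (σ τ : G) (x y : Q), x ∈ 𝒜 σ → y ∈ 𝒜 τ → ⁅x, y⁆ ∈ 𝒜 (σ * τ)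

def IsGradedAlgebraOfQuotients (L : LieSubalgebra Φ Q) : Prop :=
  ∀ (σ τ : G) (p q : Q), p ∈ 𝒜 σ → p ≠ 0 → q ∈ 𝒜 τ →
    ∃ (α : G) (x : Q), x ∈ 𝒜 α ∧ x ∈ L ∧ ⁅x, p⁆ ≠ 0 ∧ ∀ y ∈ lSpan Φ L q, ⁅x, y⁆ ∈ L

variable {L : LieSubalgebra Φ Q}

def IsGradedEssential (D : LieSubmodule Φ L Q) : Prop :=
  ∀ u ∈ L, SetLike.IsHomogeneousElem 𝒜 u → u ≠ 0 →
    ∃ w ∈ D ⊓ lieSpan Φ L {u}, SetLike.IsHomogeneousElem 𝒜 w ∧ w ≠ 0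

theorem IsGradedEssential.inf {D₁ D₂ : LieSubmodule Φ L Q} (h₁ : IsGradedEssential 𝒜 D₁)
    (hD₁ : ∀ x ∈ D₁, x ∈ L) (h₂ : IsGradedEssential 𝒜 D₂) :
    IsGradedEssential 𝒜 (D₁ ⊓ D₂) := by
  intro u hu hu_hom hu0
  obtain ⟨w, ⟨hw₁, hwu⟩, hw_hom, hw0⟩ := h₁ u hu hu_hom hu0
  obtain ⟨v, ⟨hv₂, hvw⟩, hv_hom, hv0⟩ := h₂ w (hD₁ w hw₁) hw_hom hw0
  have hle : lieSpan Φ L {w} ≤ D₁ ⊓ lieSpan Φ L {u} :=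
    lieSpan_le.2 (Set.singleton_subset_iff.2 ⟨hw₁, hwu⟩)
  exact ⟨v, ⟨⟨(hle hvw).1, hv₂⟩, (hle hvw).2⟩, hv_hom, hv0⟩

theorem isGradedEssential_colon_bot : IsGradedEssential 𝒜 (⊥ : LieSubmodule Φ L Q).colon := by
  intro u hu hu_hom hu0
  refine ⟨u, ⟨⟨hu, fun y hy => ?_⟩, subset_lieSpan rfl⟩, hu_hom, hu0⟩
  rw [(mem_bot y).1 hy, lie_zero]
  exact L.zero_mem

variable [Mul G]

theorem isGradedEssential_colon_lieSpan_singleton (hbracket : IsLieGrading 𝒜)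
    (hQ : IsGradedAlgebraOfQuotients 𝒜 L) {q : Q} (hq : SetLike.IsHomogeneousElem 𝒜 q) :
    IsGradedEssential 𝒜 (lieSpan Φ L {q}).colon := by
  rintro u hu ⟨ρ, hρ⟩ hu0
  obtain ⟨τ, hτ⟩ := hq
  obtain ⟨α, x, hxα, hxL, hxu, hxq⟩ := hQ ρ τ u q hρ hu0 hτ
  have hx : x ∈ (lieSpan Φ L {q}).colon :=
    ⟨hxL, fun y hy => hxq y (mem_lSpan_iff.2 hy)⟩
  refine ⟨⁅x, u⁆, ⟨lie_mem_colon hx hu, ?_⟩, ⟨α * ρ, hbracket _ _ _ _ hxα hρ⟩, hxu⟩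
  exact (lieSpan Φ L {u}).lie_mem (x := ⟨x, hxL⟩) (subset_lieSpan rfl)

theorem isGradedEssential_colon_lieSpan (hbracket : IsLieGrading 𝒜)
    (hQ : IsGradedAlgebraOfQuotients 𝒜 L) (F : Finset Q)
    (hF : ∀ q ∈ F, SetLike.IsHomogeneousElem 𝒜 q) :
    IsGradedEssential 𝒜 (lieSpan Φ L (F : Set Q)).colon := by
  classical
  induction F using Finset.induction_on with
  | empty => simpa only [Finset.coe_empty, span_empty] using isGradedEssential_colon_bot 𝒜
  | insert q F _ ih =>
    rw [Finset.coe_insert, Set.insert_eq, span_union, colon_sup]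
    exact (isGradedEssential_colon_lieSpan_singleton 𝒜 hbracket hQ (hF q (by simp))).inf 𝒜
      (fun x hx => hx.1) (ih fun f hf => hF f (by simp [hf]))

end Essential

section Decomposition

variable {G : Type*} [CommGroup G] [DecidableEq G] (𝒜 : G → Submodule Φ Q) [Decomposition 𝒜]

theorem decompose_lie_of_mem_right (hbracket : IsLieGrading 𝒜) {y : Q} {β : G} (hy : y ∈ 𝒜 β)
    (x : Q) (σ : G) : (decompose 𝒜 ⁅x, y⁆ (σ * β) : Q) = ⁅(decompose 𝒜 x σ : Q), y⁆ := by
  induction x using Decomposition.inductionOn 𝒜 with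
  | zero => simp
  | @homogeneous α x =>
    obtain rfl | h := eq_or_ne α σ
    · rw [decompose_of_mem_same 𝒜 (hbracket _ _ _ _ x.2 hy), decompose_coe, of_eq_same]
    · rw [decompose_of_mem_ne 𝒜 (hbracket _ _ _ _ x.2 hy) (by simpa using h),
        decompose_of_mem_ne 𝒜 x.2 h, zero_lie]
  | add a b ha hb => simp [add_lie, ha, hb]

theorem decompose_lie_of_mem_left (hbracket : IsLieGrading 𝒜) {x : Q} {α : G} (hx : x ∈ 𝒜 α)
    (y : Q) (σ : G) : (decompose 𝒜 ⁅x, y⁆ (α * σ) : Q) = ⁅x, (decompose 𝒜 y σ : Q)⁆ := by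
  rw [← lie_skew, decompose_neg, DFinsupp.neg_apply, Submodule.coe_neg, mul_comm,
    decompose_lie_of_mem_right 𝒜 hbracket hx, lie_skew]

theorem decompose_lie_eq_sum (hbracket : IsLieGrading 𝒜) [∀ (i) (x : 𝒜 i), Decidable (x ≠ 0)]
    (x y : Q) (σ : G) :
    (decompose 𝒜 ⁅x, y⁆ σ : Q) = ∑ ρ ∈ (decompose 𝒜 y).support,
      ⁅(decompose 𝒜 x (σ * ρ⁻¹) : Q), (decompose 𝒜 y ρ : Q)⁆ := by
  conv_lhs => rw [← sum_support_decompose 𝒜 y, lie_sum, decompose_sum]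
  rw [DFinsupp.finsetSum_apply, Submodule.coe_sum]
  refine Finset.sum_congr rfl fun ρ _ => ?_
  rw [← decompose_lie_of_mem_right 𝒜 hbracket (decompose 𝒜 y ρ).2, inv_mul_cancel_right]

variable {L : LieSubalgebra Φ Q}

theorem isHomogeneous_lieSpan (hbracket : IsLieGrading 𝒜) (hL : L.toSubmodule.IsHomogeneous 𝒜)
    {s : Set Q} (hs : ∀ x ∈ s, SetLike.IsHomogeneousElem 𝒜 x) :
    (lieSpan Φ L s : Submodule Φ Q).IsHomogeneous 𝒜 := by
  classical
  intro σ y hy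
  induction hy using lieSpan_induction generalizing σ with
  | mem x hx =>
    obtain ⟨τ, hτ⟩ := hs x hx
    obtain rfl | h := eq_or_ne τ σ
    · rw [decompose_of_mem_same 𝒜 hτ]; exact subset_lieSpan hx
    · rw [decompose_of_mem_ne 𝒜 hτ h]; exact zero_mem _
  | zero => simp
  | add x y _ _ hx hy => simpa [decompose_add] using add_mem (hx σ) (hy σ)
  | smul a x _ hx =>
    rw [decompose_smul, DFinsupp.smul_apply, Submodule.coe_smul]
    exact SMulMemClass.smul_mem a (hx σ)
  | lie x y _ hy =>
    rw [LieSubalgebra.coe_bracket_of_module, decompose_lie_eq_sum 𝒜 hbracket]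
    exact sum_mem fun ρ _ => (lieSpan Φ L s).lie_mem (x := ⟨_, hL _ x.2⟩) (hy ρ)

theorem isHomogeneous_colon (hbracket : IsLieGrading 𝒜) (hL : L.toSubmodule.IsHomogeneous 𝒜)
    {N : LieSubmodule Φ L Q} (hN : (N : Submodule Φ Q).IsHomogeneous 𝒜) :
    (N.colon : Submodule Φ Q).IsHomogeneous 𝒜 := by
  classical
  intro σ c hc
  refine ⟨hL σ hc.1, fun y hy => ?_⟩
  rw [← sum_support_decompose 𝒜 y, lie_sum]
  refine sum_mem fun ρ _ => ?_
  rw [← decompose_lie_of_mem_right 𝒜 hbracket (decompose 𝒜 y ρ).2]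
  exact hL _ (hc.2 _ (hN ρ hy))

variable (L) in
def IsGradedSemiprime : Prop :=
  ∀ I : Submodule Φ Q, I ≤ L.toSubmodule →
    (∀ x ∈ L, ∀ y ∈ I, ⁅x, y⁆ ∈ I) →
    (∀ y ∈ I, ∀ σ : G, (decompose 𝒜 y σ : Q) ∈ I) →
    I ≠ ⊥ → ∃ a ∈ I, ∃ b ∈ I, ⁅a, b⁆ ≠ 0

theorem IsGradedEssential.exists_homogeneous_lie_ne_zero (hbracket : IsLieGrading 𝒜)
    (hL : L.toSubmodule.IsHomogeneous 𝒜) (hLs : IsGradedSemiprime 𝒜 L)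
    (hQ : IsGradedAlgebraOfQuotients 𝒜 L) {D : LieSubmodule Φ L Q} (hD : IsGradedEssential 𝒜 D)
    (hDL : ∀ x ∈ D, x ∈ L) (hD_hom : (D : Submodule Φ Q).IsHomogeneous 𝒜)
    {p : Q} {σ : G} (hp : p ∈ 𝒜 σ) (hp0 : p ≠ 0) :
    ∃ (α : G) (x : Q), x ∈ 𝒜 α ∧ x ∈ D ∧ ⁅x, p⁆ ≠ 0 := by
  classical
  by_contra! hkill
  have hDp : ∀ d ∈ D, ⁅d, p⁆ = 0 := fun d hd => by
    rw [← sum_support_decompose 𝒜 d, sum_lie]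
    exact Finset.sum_eq_zero fun ρ _ => hkill ρ _ (decompose 𝒜 d ρ).2 (hD_hom ρ hd)
  obtain ⟨α, x, hxα, hxL, hxp, hxq⟩ := hQ σ σ p p hp hp0 hp
  have hu : ⁅x, p⁆ ∈ lieSpan Φ L {p} :=
    (lieSpan Φ L {p}).lie_mem (x := ⟨x, hxL⟩) (subset_lieSpan rfl)
  have huL : ⁅x, p⁆ ∈ L := hxq p (mem_lSpan_iff.2 (subset_lieSpan rfl))
  obtain ⟨w, ⟨hwD, hwu⟩, -, hw0⟩ := hD _ huL ⟨α * σ, hbracket _ _ _ _ hxα hp⟩ hxp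
  have hwp : w ∈ lieSpan Φ L {p} :=
    (lieSpan_le (s := {⁅x, p⁆})).2 (Set.singleton_subset_iff.2 hu) hwu
  have hp_hom : (lieSpan Φ L {p} : Submodule Φ Q).IsHomogeneous 𝒜 :=
    isHomogeneous_lieSpan 𝒜 hbracket hL (by rintro _ rfl; exact ⟨σ, hp⟩)
  let Z := D ⊓ lieSpan Φ L {p}
  obtain ⟨a, ha, b, hb, hab⟩ := hLs (Z : Submodule Φ Q) (fun z hz => hDL z hz.1)
    (fun x hx z hz => Z.lie_mem (x := ⟨x, hx⟩) hz)
    (fun z hz ρ => ⟨hD_hom ρ hz.1, hp_hom ρ hz.2⟩)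
    (fun h => hw0 ((Submodule.eq_bot_iff _).1 h w ⟨hwD, hwp⟩))
  exact hab (lie_eq_zero_of_mem_lieSpan_singleton hDp ha.1 hb.2)

end Decomposition

end

/-- Let `L` be a graded semiprime graded subalgebra of a
`G`-graded Lie algebra `Q = ⊕_{σ∈G} Q_σ`.  If `Q` is a graded algebra of
quotients of `L`, then `Q` is an algebra of quotients of `L` (in the non-graded
sense). -/
theorem graded_quotients_implies_quotients_of_graded_semiprime
    {Φ : Type*} [CommRing Φ] {G : Type*} [CommGroup G] [DecidableEq G]
    {Q : Type*} [LieRing Q] [LieAlgebra Φ Q]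
    (𝒜 : G → Submodule Φ Q) [DirectSum.Decomposition 𝒜]
    (hbracket : ∀ (σ τ : G) (x y : Q), x ∈ 𝒜 σ → y ∈ 𝒜 τ → ⁅x, y⁆ ∈ 𝒜 (σ * τ))
    (L : LieSubalgebra Φ Q)
    (hLgr : ∀ x ∈ L, ∀ σ : G, (DirectSum.decompose 𝒜 x σ : Q) ∈ L)
    -- `L` is graded semiprime:
    (hsemiprime : ∀ I : Submodule Φ Q, I ≤ L.toSubmodule →
      (∀ x ∈ L, ∀ y ∈ I, ⁅x, y⁆ ∈ I) →
      (∀ y ∈ I, ∀ σ : G, (DirectSum.decompose 𝒜 y σ : Q) ∈ I) →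
      I ≠ ⊥ → ∃ a ∈ I, ∃ b ∈ I, ⁅a, b⁆ ≠ 0)
    -- `Q` is a graded algebra of quotients of `L`:
    (hquot : ∀ (σ τ : G) (p q : Q), p ∈ 𝒜 σ → p ≠ 0 → q ∈ 𝒜 τ →
      ∃ (α : G) (x : Q), x ∈ 𝒜 α ∧ x ∈ L ∧ ⁅x, p⁆ ≠ 0 ∧
        ∀ y ∈ lSpan Φ L q, ⁅x, y⁆ ∈ L) :
    ∀ p : Q, p ≠ 0 → ∀ q : Q,
      ∃ x ∈ L, ⁅x, p⁆ ≠ 0 ∧ ∀ y ∈ lSpan Φ L q, ⁅x, y⁆ ∈ L := by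
  classical
  intro p hp q
  have hL : L.toSubmodule.IsHomogeneous 𝒜 := fun σ x hx => hLgr x hx σ
  obtain ⟨σ, hσ⟩ : ∃ σ, (decompose 𝒜 p σ : Q) ≠ 0 := by
    by_contra! h
    exact hp (by rw [← sum_support_decompose 𝒜 p]; exact Finset.sum_eq_zero fun σ _ => h σ)
  let F := (decompose 𝒜 q).support.image fun τ => (decompose 𝒜 q τ : Q)
  have hF : ∀ f ∈ F, SetLike.IsHomogeneousElem 𝒜 f := by
    simp only [F, Finset.mem_image]
    rintro _ ⟨τ, -, rfl⟩
    exact ⟨τ, (decompose 𝒜 q τ).2⟩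
  have hqF : lieSpan Φ L {q} ≤ lieSpan Φ L (F : Set Q) := by
    refine lieSpan_le.2 (Set.singleton_subset_iff.2 ?_)
    rw [← sum_support_decompose 𝒜 q]
    exact sum_mem fun τ hτ => subset_lieSpan (Finset.mem_image_of_mem _ hτ)
  obtain ⟨α, x, hxα, hx, hxp⟩ :=
    (isGradedEssential_colon_lieSpan 𝒜 hbracket hquot F hF).exists_homogeneous_lie_ne_zero 𝒜
      hbracket hL hsemiprime hquot (fun x hx => hx.1)
      (isHomogeneous_colon 𝒜 hbracket hL (isHomogeneous_lieSpan 𝒜 hbracket hL hF))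
      (decompose 𝒜 p σ).2 hσ
  refine ⟨x, hx.1, fun h => hxp ?_, fun y hy => hx.2 y (hqF (mem_lSpan_iff.1 hy))⟩
  rw [← decompose_lie_of_mem_left 𝒜 hbracket hxα, h, decompose_zero]
  rfl
end
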